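/- arXiv:gr-qc/9701051 — 10 statements merged into one kernel-verified Lean document; each statement's English description precedes it below -/
import Mathlib

section
/- Cramér–Rao inequality: Let ξ : ℝ → H be a curve with ‖ξ(θ)‖ = 1 for all θ that is differentiable at θ₀, let T be a continuous self-adjoint operator on H, and set τ(θ) = ⟪Tξ(θ), ξ(θ)⟫ (so τ is differentiable at θ₀). Then Var_{ξ(θ₀)}[T] · 4‖ξ'(θ₀)‖² ≥ (τ'(θ₀))²; that is, the variance of an unbiased estimator T of the function τ is bounded below by τ̇² divided by the Fisher information G(θ₀) = 4‖ξ'(θ₀)‖². -/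
open scoped RealInnerProductSpace

/-- **Cramér–Rao inequality.** For a curve `ξ` of unit vectors in a real inner product
space, differentiable at `θ₀` with derivative `v`, and a continuous self-adjoint operator `T`
with expectation function `τ θ = ⟪T (ξ θ), ξ θ⟫`, the variance of `T` in the state `ξ θ₀`
times the Fisher information `4‖v‖²` dominates `(τ' θ₀)²`. -/
theorem cramer_rao_inequality {H : Type*} [NormedAddCommGroup H] [InnerProductSpace ℝ H]
    (ξ : ℝ → H) (hnorm : ∀ θ, ‖ξ θ‖ = 1) (θ₀ : ℝ) (v : H) (hderiv : HasDerivAt ξ v θ₀)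
    (T : H →L[ℝ] H) (hT : ∀ x y : H, ⟪T x, y⟫ = ⟪x, T y⟫) :
    (‖T (ξ θ₀)‖ ^ 2 - ⟪T (ξ θ₀), ξ θ₀⟫ ^ 2) * (4 * ‖v‖ ^ 2) ≥
      (deriv (fun θ => ⟪T (ξ θ), ξ θ⟫) θ₀) ^ 2 := by
  -- derivative of T ∘ ξ
  have hTξ : HasDerivAt (fun θ => T (ξ θ)) (T v) θ₀ :=
    T.hasFDerivAt.comp_hasDerivAt θ₀ hderiv
  -- derivative of τ
  have hτ : HasDerivAt (fun θ => ⟪T (ξ θ), ξ θ⟫) (⟪T (ξ θ₀), v⟫ + ⟪T v, ξ θ₀⟫) θ₀ :=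
    hTξ.inner ℝ hderiv
  -- ⟪ξ θ₀, v⟫ = 0
  have hone : HasDerivAt (fun θ => ⟪ξ θ, ξ θ⟫) (⟪ξ θ₀, v⟫ + ⟪v, ξ θ₀⟫) θ₀ :=
    hderiv.inner ℝ hderiv
  have hconst : (fun θ => ⟪ξ θ, ξ θ⟫) = fun _ => (1 : ℝ) := by
    funext θ
    rw [real_inner_self_eq_norm_sq, hnorm θ]; norm_num
  have horth : ⟪ξ θ₀, v⟫ = 0 := by
    have h0 : HasDerivAt (fun _ : ℝ => (1 : ℝ)) (⟪ξ θ₀, v⟫ + ⟪v, ξ θ₀⟫) θ₀ := hconst ▸ hone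
    have := h0.deriv
    simp [deriv_const, real_inner_comm v (ξ θ₀)] at this
    linarith [real_inner_comm v (ξ θ₀), this]
  have hderiv_eq : deriv (fun θ => ⟪T (ξ θ), ξ θ⟫) θ₀ = 2 * ⟪T (ξ θ₀), v⟫ := by
    rw [hτ.deriv, hT v (ξ θ₀), real_inner_comm v (T (ξ θ₀))]; ring
  set c : ℝ := ⟪T (ξ θ₀), ξ θ₀⟫ with hc
  set w : H := T (ξ θ₀) - c • ξ θ₀ with hw
  have hwv : ⟪w, v⟫ = ⟪T (ξ θ₀), v⟫ := by
    rw [hw, inner_sub_left, inner_smul_left, horth]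
    simp
  have hwnorm : ‖w‖ ^ 2 = ‖T (ξ θ₀)‖ ^ 2 - c ^ 2 := by
    rw [hw, norm_sub_sq_real, inner_smul_right, ← hc, norm_smul, hnorm θ₀, Real.norm_eq_abs]
    have : |c| ^ 2 = c ^ 2 := sq_abs c
    nlinarith [this]
  have cs := real_inner_mul_inner_self_le w v
  rw [hwv, real_inner_self_eq_norm_sq, real_inner_self_eq_norm_sq] at cs
  rw [hderiv_eq]
  have hv : (0:ℝ) ≤ ‖v‖ ^ 2 := sq_nonneg _
  nlinarith [cs, hwnorm]
end

section
/- Uncertainty relation with covariance term: Let H be a real inner product space with compatible complex structure J, let A (the Hamiltonian) and T be continuous self-adjoint Hermitian operators on H, and let ξ : ℝ → H be a curve with ‖ξ(t)‖ = 1 for all t that is differentiable at t₀ and satisfies the modified Schrödinger equation ξ'(t₀) = J((A − ⟪Aξ(t₀), ξ(t₀)⟫·id)ξ(t₀)). If T is a locally unbiased estimator for t at t₀, i.e. the function t ↦ ⟪Tξ(t), ξ(t)⟫ is differentiable at t₀ with derivative 1, then Var_{ξ(t₀)}[T] · Var_{ξ(t₀)}[A] ≥ 1/4 + Cov_{ξ(t₀)}[A,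 T]². In particular Var_{ξ(t₀)}[T] · Var_{ξ(t₀)}[A] ≥ 1/4 (the quantum Cramér–Rao/Heisenberg bound). -/
open scoped RealInnerProductSpace

/-- **Uncertainty relation with covariance term.** For a compatible complex structure `J`,
Hermitian self-adjoint operators `A` (the Hamiltonian) and `T`, and a curve of unit vectors
satisfying the modified Schrödinger equation at `t₀`, if `T` is a locally unbiased estimator
of `t` at `t₀` then `Var[T]·Var[A] ≥ 1/4 + Cov[A,T]²`, and in particular
`Var[T]·Var[A] ≥ 1/4`. -/
theorem uncertainty_relation_with_covariance {H : Type*}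
    [NormedAddCommGroup H] [InnerProductSpace ℝ H]
    (J A T : H →L[ℝ] H)
    (hJ2 : ∀ x, J (J x) = -x) (hJinner : ∀ x y, ⟪J x, J y⟫ = ⟪x, y⟫)
    (hAsa : ∀ x y, ⟪A x, y⟫ = ⟪x, A y⟫) (hAJ : A ∘L J = J ∘L A)
    (hTsa : ∀ x y, ⟪T x, y⟫ = ⟪x, T y⟫) (hTJ : T ∘L J = J ∘L T)
    (ξ : ℝ → H) (hnorm : ∀ t, ‖ξ t‖ = 1) (t₀ : ℝ)
    (hschro : HasDerivAt ξ (J (A (ξ t₀) - ⟪A (ξ t₀), ξ t₀⟫ • ξ t₀)) t₀)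
    (hunbiased : HasDerivAt (fun t => ⟪T (ξ t), ξ t⟫) 1 t₀) :
    (‖T (ξ t₀)‖ ^ 2 - ⟪T (ξ t₀), ξ t₀⟫ ^ 2) * (‖A (ξ t₀)‖ ^ 2 - ⟪A (ξ t₀), ξ t₀⟫ ^ 2) ≥
        1 / 4 + ⟪A (ξ t₀) - ⟪A (ξ t₀), ξ t₀⟫ • ξ t₀,
          T (ξ t₀) - ⟪T (ξ t₀), ξ t₀⟫ • ξ t₀⟫ ^ 2 ∧
      (‖T (ξ t₀)‖ ^ 2 - ⟪T (ξ t₀), ξ t₀⟫ ^ 2) * (‖A (ξ t₀)‖ ^ 2 - ⟪A (ξ t₀), ξ t₀⟫ ^ 2) ≥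
        1 / 4 := by
  set ψ := ξ t₀ with hψdef
  have hψ : ⟪ψ, ψ⟫ = 1 := by
    rw [real_inner_self_eq_norm_sq, hnorm t₀]; norm_num
  set α := ⟪A ψ, ψ⟫ with hα
  set τ := ⟪T ψ, ψ⟫ with hτ
  set a := A ψ - α • ψ with ha
  set b := T ψ - τ • ψ with hb
  -- skew-adjointness of J
  have hskew : ∀ x y : H, ⟪J x, y⟫ = -⟪x, J y⟫ := by
    intro x y
    have h := hJinner x (J y)
    rw [hJ2 y, inner_neg_right] at h
    linarith
  have hJself : ∀ x : H, ⟪J x, x⟫ = 0 := by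
    intro x
    have h := hskew x x
    have h2 : ⟪x, J x⟫ = ⟪J x, x⟫ := real_inner_comm _ _
    linarith
  have hAJψ : A (J ψ) = J (A ψ) := ContinuousLinearMap.ext_iff.mp hAJ ψ
  have hJAψ : ⟪J ψ, A ψ⟫ = 0 := by
    have h1 : ⟪A (J ψ), ψ⟫ = ⟪J ψ, A ψ⟫ := hAsa (J ψ) ψ
    rw [hAJψ, hskew (A ψ) ψ] at h1
    have h2 : ⟪A ψ, J ψ⟫ = ⟪J ψ, A ψ⟫ := real_inner_comm _ _
    linarith
  have hψJa : ⟪ψ, J a⟫ = 0 := by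
    have h1 : ⟪J ψ, a⟫ = -⟪ψ, J a⟫ := hskew ψ a
    have h2 : ⟪J ψ, a⟫ = 0 := by
      rw [ha, inner_sub_right, inner_smul_right, hJAψ, hJself ψ]; ring
    linarith
  -- derivative computation
  have hTderiv : HasDerivAt (fun t => T (ξ t)) (T (J a)) t₀ :=
    T.hasFDerivAt.comp_hasDerivAt t₀ hschro
  have hinner : HasDerivAt (fun t => ⟪T (ξ t), ξ t⟫)
      (⟪T ψ, J a⟫ + ⟪T (J a), ψ⟫) t₀ := hTderiv.inner ℝ hschro
  have key : (1 : ℝ) = ⟪T ψ, J a⟫ + ⟪T (J a), ψ⟫ := hunbiased.unique hinner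
  have hT1 : ⟪T (J a), ψ⟫ = ⟪T ψ, J a⟫ := by
    rw [hTsa (J a) ψ]; exact real_inner_comm _ _
  have hbJa : ⟪b, J a⟫ = 1 / 2 := by
    rw [hb, inner_sub_left, inner_smul_left]
    rw [hT1] at key
    simp only [RCLike.ofReal_real_eq_id, id, conj_trivial] at *
    rw [hψJa]
    linarith
  set P := ⟪a, a⟫ with hP
  set Q := ⟪b, b⟫ with hQ
  set C := ⟪a, b⟫ with hC
  have hJaJa : ⟪J a, J a⟫ = P := hJinner a a
  have haJa : ⟪a, J a⟫ = 0 := by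
    have := hJself a
    have h2 : ⟪a, J a⟫ = ⟪J a, a⟫ := real_inner_comm _ _
    linarith
  have hcs1 := real_inner_mul_inner_self_le b (J a)
  rw [hbJa, hJaJa] at hcs1
  have hPpos : 0 < P := by
    nlinarith [real_inner_self_nonneg (x := a), real_inner_self_nonneg (x := b)]
  -- second Cauchy–Schwarz
  have hcs2 := real_inner_mul_inner_self_le (J a) (P • b - C • a)
  have e1 : ⟪J a, P • b - C • a⟫ = P / 2 := by
    rw [inner_sub_right, inner_smul_right, inner_smul_right]
    have h1 : ⟪J a, b⟫ = ⟪b, J a⟫ := real_inner_comm _ _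
    have h2 : ⟪J a, a⟫ = ⟪a, J a⟫ := real_inner_comm _ _
    rw [h1, hbJa, h2, haJa]; ring
  have e2 : ⟪P • b - C • a, P • b - C • a⟫ = P * P * Q - P * C * C := by
    rw [inner_sub_left, inner_sub_right, inner_sub_right]
    simp only [inner_smul_left, inner_smul_right, RCLike.ofReal_real_eq_id, id, conj_trivial]
    have h1 : ⟪b, a⟫ = C := real_inner_comm _ _
    rw [h1, ← hC, ← hQ, ← hP]; ring
  rw [e1, e2, hJaJa] at hcs2
  have main : Q * P ≥ 1 / 4 + C ^ 2 := by nlinarith [mul_pos hPpos hPpos]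
  have hQval : ‖T ψ‖ ^ 2 - τ ^ 2 = Q := by
    rw [hQ, hb, inner_sub_left, inner_sub_right, inner_sub_right]
    simp only [inner_smul_left, inner_smul_right, RCLike.ofReal_real_eq_id, id, conj_trivial]
    rw [real_inner_self_eq_norm_sq, hψ]
    have : ⟪ψ, T ψ⟫ = τ := by rw [real_inner_comm]
    rw [this, ← hτ]; ring
  have hPval : ‖A ψ‖ ^ 2 - α ^ 2 = P := by
    rw [hP, ha, inner_sub_left, inner_sub_right, inner_sub_right]
    simp only [inner_smul_left, inner_smul_right, RCLike.ofReal_real_eq_id, id, conj_trivial]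
    rw [real_inner_self_eq_norm_sq, hψ]
    have : ⟪ψ, A ψ⟫ = α := by rw [real_inner_comm]
    rw [this, ← hα]; ring
  rw [hQval, hPval]
  constructor
  · exact main
  · linarith [main, sq_nonneg C]
end

section
/- Second-order generalised Heisenberg relation: Let T be a continuous self-adjoint Hermitian operator on H and let ξ(t) = exp(t·(J∘Ã))ξ₀ be the Schrödinger trajectory of the Hamiltonian A. Assume μ₂ > 0 and K² := μ₄/μ₂² − μ₃²/μ₂³ − 1 > 0, and assume the two identities that hold for a canonically conjugate unbiased estimator: 2⟪Tξ'(t₀), ξ(t₀)⟫ = 1 (local unbiasedness at t₀) and ⟪T(J(Ã(Ãξ(t₀)))), ξ(t₀)⟫ = 0 (a consequence of canonical conjugacy of T and A). Then Var_{ξ(t₀)}[T] · μ₂ ≥ (1/4)·(1 + μ₃²/(μ₂³·K²)), where μ₂ = Var_{ξ(t₀)}[A]. -/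
open scoped RealInnerProductSpace

set_option synthInstance.maxHeartbeats 1000000 in
private lemma exp_norm_eq' {H : Type*} [NormedAddCommGroup H] [InnerProductSpace ℝ H]
    [CompleteSpace H] (L : H →L[ℝ] H) (hL : ∀ x, ⟪L x, x⟫ = 0) (t : ℝ) (z : H) :
    ‖NormedSpace.exp (t • L) z‖ = ‖z‖ := by
  set f : ℝ → H := fun s => NormedSpace.exp (s • L) z with hfdef
  have hcomm : ∀ s : ℝ, Commute (NormedSpace.exp (s • L)) L := fun s =>
    Commute.exp_left ((Commute.refl L).smul_left s)
  have hder : ∀ s : ℝ, HasDerivAt f (L (f s)) s := by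
    intro s
    have h1 : HasDerivAt (fun u : ℝ => NormedSpace.exp (u • L))
        (NormedSpace.exp (s • L) * L) s := hasDerivAt_exp_smul_const L s
    have h2 := h1.clm_apply (hasDerivAt_const s z)
    simp only [ContinuousLinearMap.mul_apply, map_zero, add_zero] at h2
    have := (hcomm s).eq
    have h3 : NormedSpace.exp (s • L) (L z) = L (f s) := by
      have := congrArg (fun φ : H →L[ℝ] H => φ z) (hcomm s).eq
      simpa [ContinuousLinearMap.mul_apply] using this
    rw [h3] at h2
    exact h2
  have hg : ∀ s : ℝ, HasDerivAt (fun s => ⟪f s, f s⟫) 0 s := by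
    intro s
    have := (hder s).inner ℝ (hder s)
    have e1 : ⟪L (f s), f s⟫ = 0 := hL _
    have e2 : ⟪f s, L (f s)⟫ = 0 := by rw [real_inner_comm]; exact hL _
    have h0 : ⟪f s, L (f s)⟫ + ⟪L (f s), f s⟫ = 0 := by rw [e1, e2]; ring
    rwa [h0] at this
  have hconst : ⟪f t, f t⟫ = ⟪f 0, f 0⟫ :=
    is_const_of_deriv_eq_zero (fun s => (hg s).differentiableAt)
      (fun s => (hg s).deriv) t 0
  have hf0 : f 0 = z := by
    simp [hfdef, NormedSpace.exp_zero]
  rw [hf0] at hconst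
  have h1 := real_inner_self_eq_norm_mul_norm (f t)
  have h2 := real_inner_self_eq_norm_mul_norm z
  have hft : f t = NormedSpace.exp (t • L) z := rfl
  rw [← hft]
  nlinarith [norm_nonneg (f t), norm_nonneg z]

private lemma exp_inner_eq' {H : Type*} [NormedAddCommGroup H] [InnerProductSpace ℝ H]
    [CompleteSpace H] (L : H →L[ℝ] H) (hL : ∀ x, ⟪L x, x⟫ = 0) (t : ℝ) (x y : H) :
    ⟪NormedSpace.exp (t • L) x, NormedSpace.exp (t • L) y⟫ = ⟪x, y⟫ := by
  have h := exp_norm_eq' L hL t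
  rw [real_inner_eq_norm_add_mul_self_sub_norm_mul_self_sub_norm_mul_self_div_two,
    real_inner_eq_norm_add_mul_self_sub_norm_mul_self_sub_norm_mul_self_div_two x y,
    ← map_add, h, h, h]


set_option synthInstance.maxHeartbeats 1000000
set_option maxHeartbeats 1000000

/-- **Second-order generalised Heisenberg relation.** Along the Schrödinger trajectory
`ξ t = exp (t • (J ∘L Ã)) ξ₀` of a Hamiltonian `A`, for a canonically conjugate unbiased
estimator `T` (expressed through the two identities `2⟪Tξ'(t₀), ξ(t₀)⟫ = 1` and
`⟪T(J(Ã(Ãξ(t₀)))), ξ(t₀)⟫ = 0`), the product of the variance of `T` and `μ₂ = Var[A]`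
is bounded below by `(1/4)(1 + μ₃²/(μ₂³K²))`, where `K² = μ₄/μ₂² − μ₃²/μ₂³ − 1`. -/
theorem second_order_generalised_heisenberg {H : Type*}
    [NormedAddCommGroup H] [InnerProductSpace ℝ H] [CompleteSpace H]
    (J A T : H →L[ℝ] H)
    (hJ2 : ∀ x, J (J x) = -x) (hJinner : ∀ x y, ⟪J x, J y⟫ = ⟪x, y⟫)
    (hAsa : ∀ x y, ⟪A x, y⟫ = ⟪x, A y⟫) (hAJ : A ∘L J = J ∘L A)
    (hTsa : ∀ x y, ⟪T x, y⟫ = ⟪x, T y⟫) (hTJ : T ∘L J = J ∘L T)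
    (ξ₀ : H) (hξ₀ : ‖ξ₀‖ = 1)
    (Atil : H →L[ℝ] H) (hAtil : Atil = A - ⟪A ξ₀, ξ₀⟫ • 1)
    (ξ : ℝ → H) (hξ : ∀ t, ξ t = NormedSpace.exp (t • (J ∘L Atil)) ξ₀)
    (t₀ : ℝ) (μ₂ μ₃ μ₄ K2 : ℝ)
    (hμ₂ : μ₂ = ⟪(Atil ^ 2) ξ₀, ξ₀⟫) (hμ₃ : μ₃ = ⟪(Atil ^ 3) ξ₀, ξ₀⟫)
    (hμ₄ : μ₄ = ⟪(Atil ^ 4) ξ₀, ξ₀⟫)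
    (hK2 : K2 = μ₄ / μ₂ ^ 2 - μ₃ ^ 2 / μ₂ ^ 3 - 1)
    (hμ₂pos : 0 < μ₂) (hK2pos : 0 < K2)
    (hunbiased : 2 * ⟪T ((J ∘L Atil) (ξ t₀)), ξ t₀⟫ = 1)
    (hconj : ⟪T (J (Atil (Atil (ξ t₀)))), ξ t₀⟫ = 0) :
    (‖T (ξ t₀)‖ ^ 2 - ⟪T (ξ t₀), ξ t₀⟫ ^ 2) * μ₂ ≥
      (1 / 4) * (1 + μ₃ ^ 2 / (μ₂ ^ 3 * K2)) := by
  -- notation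
  set B := Atil with hB
  set η := ξ t₀ with hηdef
  have hηexp : η = NormedSpace.exp (t₀ • (J ∘L B)) ξ₀ := hξ t₀
  -- pointwise form of B
  have hBpt : ∀ x, B x = A x - ⟪A ξ₀, ξ₀⟫ • x := by
    intro x; rw [hAtil]; simp
  have hBsa : ∀ x y : H, ⟪B x, y⟫ = ⟪x, B y⟫ := by
    intro x y
    rw [hBpt, hBpt, inner_sub_left, inner_sub_right, real_inner_smul_left,
      real_inner_smul_right, hAsa x y]
  have hAJpt : ∀ x, A (J x) = J (A x) := fun x =>
    congrArg (fun φ : H →L[ℝ] H => φ x) hAJ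
  have hTJpt : ∀ x, T (J x) = J (T x) := fun x =>
    congrArg (fun φ : H →L[ℝ] H => φ x) hTJ
  have hBJ : ∀ x, B (J x) = J (B x) := by
    intro x; rw [hBpt, hBpt, hAJpt, map_sub, map_smul]
  have hJanti : ∀ x y : H, ⟪J x, y⟫ = -⟪x, J y⟫ := by
    intro x y
    have h1 := hJinner x (J y)
    rw [hJ2, inner_neg_right] at h1
    linarith
  have hL0 : ∀ x, ⟪(J ∘L B) x, x⟫ = 0 := by
    intro x
    have e1 : ⟪J (B x), x⟫ = -⟪B x, J x⟫ := hJanti _ _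
    have e2 : ⟪B x, J x⟫ = ⟪x, B (J x)⟫ := hBsa _ _
    have e3 : ⟪x, B (J x)⟫ = ⟪x, J (B x)⟫ := by rw [hBJ]
    have e4 : ⟪x, J (B x)⟫ = ⟪J (B x), x⟫ := real_inner_comm _ _
    have h5 : (J ∘L B) x = J (B x) := rfl
    rw [h5]
    linarith [e1, e2, e3, e4]
  -- the evolution preserves inner products and commutes with B
  have hSinner : ∀ x y : H, ⟪NormedSpace.exp (t₀ • (J ∘L B)) x,
      NormedSpace.exp (t₀ • (J ∘L B)) y⟫ = ⟪x, y⟫ := exp_inner_eq' _ hL0 t₀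
  have hSB : ∀ x, B (NormedSpace.exp (t₀ • (J ∘L B)) x)
      = NormedSpace.exp (t₀ • (J ∘L B)) (B x) := by
    intro x
    have hcomm : Commute (J ∘L B) B := by
      show (J ∘L B) * B = B * (J ∘L B)
      ext y
      simp only [ContinuousLinearMap.mul_apply, ContinuousLinearMap.comp_apply]
      rw [hBJ]
    have := (Commute.exp_left (hcomm.smul_left t₀)).eq
    have := congrArg (fun φ : H →L[ℝ] H => φ x) this
    simpa [ContinuousLinearMap.mul_apply] using this.symm
  -- unit norm and moments at η
  have hunit : ⟪η, η⟫ = 1 := by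
    rw [hηexp, hSinner, real_inner_self_eq_norm_mul_norm, hξ₀]; norm_num
  have hη1 : ‖η‖ = 1 := by rw [hηexp, exp_norm_eq' _ hL0, hξ₀]
  have hmom : ∀ x : H, ⟪B x, B x⟫ = ⟪B x, B x⟫ := fun _ => rfl
  have hBk : ∀ x : H, B (NormedSpace.exp (t₀ • (J ∘L B)) x)
      = NormedSpace.exp (t₀ • (J ∘L B)) (B x) := hSB
  have h1 : ⟪B η, η⟫ = 0 := by
    rw [hηexp, hSB, hSinner, hBpt, inner_sub_left, real_inner_smul_left,
      real_inner_self_eq_norm_mul_norm, hξ₀]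
    ring
  have hBηk : ∀ x : H, B (B (NormedSpace.exp (t₀ • (J ∘L B)) x))
      = NormedSpace.exp (t₀ • (J ∘L B)) (B (B x)) := by
    intro x; rw [hSB, hSB]
  have hpow2 : (B ^ 2) ξ₀ = B (B ξ₀) := by
    simp [pow_succ, ContinuousLinearMap.mul_apply]
  have hpow3 : (B ^ 3) ξ₀ = B (B (B ξ₀)) := by
    simp [pow_succ, ContinuousLinearMap.mul_apply]
  have hpow4 : (B ^ 4) ξ₀ = B (B (B (B ξ₀))) := by
    simp [pow_succ, ContinuousLinearMap.mul_apply]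
  have h2 : ⟪B (B η), η⟫ = μ₂ := by
    rw [hηexp, hSB, hSB, hSinner, hμ₂, hpow2]
  have h3 : ⟪B (B (B η)), η⟫ = μ₃ := by
    rw [hηexp, hSB, hSB, hSB, hSinner, hμ₃, hpow3]
  have h4 : ⟪B (B (B (B η))), η⟫ = μ₄ := by
    rw [hηexp, hSB, hSB, hSB, hSB, hSinner, hμ₄, hpow4]
  -- derived inner products
  have p1 : ⟪B η, B η⟫ = μ₂ := by
    have e := hBsa (B η) η
    rw [h2] at e
    exact e.symm
  have p2 : ⟪B η, B (B η)⟫ = μ₃ := by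
    have e := hBsa (B (B η)) η
    rw [h3] at e
    rw [real_inner_comm]
    exact e.symm
  have p3 : ⟪B (B η), B (B η)⟫ = μ₄ := by
    have e1 := hBsa (B (B (B η))) η
    have e2 := hBsa (B (B η)) (B η)
    rw [h4] at e1
    rw [← e2]
    exact e1.symm
  have p4 : ⟪η, B (B η)⟫ = μ₂ := by rw [real_inner_comm]; exact h2
  have p5 : ⟪η, B η⟫ = 0 := by rw [real_inner_comm]; exact h1
  -- orthogonality facts involving J
  have hη2 : ⟪η, J (B η)⟫ = 0 := by
    rw [real_inner_comm]; exact hL0 η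
  have hBJB : ⟪B η, J (B η)⟫ = 0 := by
    have e1 : ⟪J (B η), B η⟫ = -⟪B η, J (B η)⟫ := hJanti _ _
    have e2 : ⟪J (B η), B η⟫ = ⟪B η, J (B η)⟫ := real_inner_comm _ _
    linarith
  have hη3 : ⟪η, J (B (B η))⟫ = 0 := by
    have e1 : ⟪J (B (B η)), η⟫ = -⟪B (B η), J η⟫ := hJanti _ _
    have e2 : ⟪B (B η), J η⟫ = ⟪B η, B (J η)⟫ := hBsa _ _
    have e3 : B (J η) = J (B η) := hBJ η
    rw [real_inner_comm, e1, e2, e3, hBJB]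
    ring
  have hη4 : ⟪η, J η⟫ = 0 := by
    have e1 : ⟪J η, η⟫ = -⟪η, J η⟫ := hJanti _ _
    have e2 : ⟪J η, η⟫ = ⟪η, J η⟫ := real_inner_comm _ _
    linarith
  -- T facts
  have hT1 : ⟪T η, J (B η)⟫ = 1 / 2 := by
    have h0 : (J ∘L B) η = J (B η) := rfl
    rw [h0] at hunbiased
    rw [hTsa, real_inner_comm] at hunbiased
    linarith
  have hT2 : ⟪T η, J (B (B η))⟫ = 0 := by
    rw [hTsa, real_inner_comm] at hconj
    exact hconj
  have hT3 : ⟪T η, J η⟫ = 0 := by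
    have e1 : ⟪J (T η), η⟫ = -⟪T η, J η⟫ := hJanti _ _
    have e2 : ⟪J (T η), η⟫ = ⟪T (J η), η⟫ := by rw [hTJpt]
    have e3 : ⟪T (J η), η⟫ = ⟪J η, T η⟫ := hTsa _ _
    have e4 : ⟪J η, T η⟫ = ⟪T η, J η⟫ := real_inner_comm _ _
    linarith
  -- the test vector
  set c : ℝ := ⟪T η, η⟫ with hc
  set D : ℝ := μ₄ - μ₂ ^ 2 with hD
  -- positivity
  have hN : μ₂ * D - μ₃ ^ 2 = μ₂ ^ 3 * K2 := by
    rw [hD, hK2]; field_simp; ring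
  have hNpos : 0 < μ₂ * D - μ₃ ^ 2 := by
    rw [hN]; positivity
  have hDpos : 0 < D := by
    have h0 : 0 < μ₂ * D := by have := sq_nonneg μ₃; linarith
    have h2 : 0 < (μ₂ * D) / μ₂ := div_pos h0 hμ₂pos
    rwa [mul_div_cancel_left₀ _ (ne_of_gt hμ₂pos)] at h2
  set α : ℝ := -μ₃ / D with hα
  set w : H := T η - c • η with hw
  set v : H := B η + α • B (B η) - (α * μ₂) • η with hv
  -- key inner products
  have q1 : ⟪B (B η), B η⟫ = μ₃ := by rw [real_inner_comm]; exact p2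
  have hwu : ⟪w, J v⟫ = 1 / 2 := by
    rw [hw, hv]
    simp only [map_sub, map_add, map_smul, inner_sub_left, inner_sub_right,
      inner_add_left, inner_add_right, real_inner_smul_left, real_inner_smul_right,
      hT1, hT2, hT3, hη2, hη3, hη4]
    ring
  have huu : ⟪J v, J v⟫ = μ₂ + 2 * α * μ₃ + α ^ 2 * D := by
    rw [hJinner, hv]
    simp only [inner_sub_left, inner_sub_right, inner_add_left, inner_add_right,
      real_inner_smul_left, real_inner_smul_right,
      p1, p2, p3, p4, p5, q1, h1, h2, hunit]
    rw [hD]; ring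
  have hww : ⟪w, w⟫ = ‖T η‖ ^ 2 - c ^ 2 := by
    have hcη : ⟪η, T η⟫ = c := by rw [real_inner_comm]
    have hcη' : ⟪T η, η⟫ = c := rfl
    have hTT : ⟪T η, T η⟫ = ‖T η‖ ^ 2 := real_inner_self_eq_norm_sq (T η)
    rw [hw]
    simp only [inner_sub_left, inner_sub_right, real_inner_smul_left,
      real_inner_smul_right, hunit, hcη, hcη', hTT]
    ring
  -- Cauchy-Schwarz
  have hval : μ₂ + 2 * α * μ₃ + α ^ 2 * D = (μ₂ * D - μ₃ ^ 2) / D := by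
    rw [hα]; field_simp; ring
  have hcs := real_inner_mul_inner_self_le w (J v)
  rw [hwu, hww, huu, hval] at hcs
  set V : ℝ := ‖T η‖ ^ 2 - c ^ 2 with hV
  have hq2 : D / 4 ≤ V * (μ₂ * D - μ₃ ^ 2) := by
    have h'' : V * ((μ₂ * D - μ₃ ^ 2) / D) = V * (μ₂ * D - μ₃ ^ 2) / D := by ring
    rw [h'', le_div_iff₀ hDpos] at hcs
    linarith
  have hgoal2 : (‖T η‖ ^ 2 - ⟪T η, η⟫ ^ 2) * μ₂ = V * μ₂ := by rw [hV, hc]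
  rw [ge_iff_le, hgoal2, ← hN]
  have hrhs : (1 / 4 : ℝ) * (1 + μ₃ ^ 2 / (μ₂ * D - μ₃ ^ 2))
      = μ₂ * D / (4 * (μ₂ * D - μ₃ ^ 2)) := by
    field_simp
    try ring
  rw [hrhs, div_le_iff₀ (by positivity)]
  have key := mul_le_mul_of_nonneg_left hq2 hμ₂pos.le
  calc μ₂ * D = 4 * (μ₂ * (D / 4)) := by ring
    _ ≤ 4 * (μ₂ * (V * (μ₂ * D - μ₃ ^ 2))) :=
        mul_le_mul_of_nonneg_left key (by norm_num)
    _ = V * μ₂ * (4 * (μ₂ * D - μ₃ ^ 2)) := by ring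
end

section
/- Generalised Bhattacharyya bounds: Let ξ be a unit vector in a real inner product space H, let T be a continuous self-adjoint operator on H, and let (v_r)_{r ∈ s} be a finite family of nonzero, pairwise orthogonal vectors of H, each orthogonal to ξ. Then Var_ξ[T] ≥ Σ_{r ∈ s} ⟪Tξ, v_r⟫² / ‖v_r‖². (Equivalently, writing ∇τ = 2(Tξ − ⟪Tξ,ξ⟫ξ) for the gradient of the expectation function, Var_ξ[T] ≥ (1/4)·Σ_r ⟪v_r, ∇τ⟫²/‖v_r‖².) -/
open scoped RealInnerProductSpace

/-- **Generalised Bhattacharyya bounds.** For a unit vector `ξ`, a continuous self-adjoint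
operator `T`, and a finite family of nonzero pairwise-orthogonal vectors `v r`, each
orthogonal to `ξ`, the variance of `T` in the state `ξ` dominates the sum of the squared
components `⟪Tξ, v r⟫²/‖v r‖²`. -/
theorem generalised_bhattacharyya_bounds {H : Type*}
    [NormedAddCommGroup H] [InnerProductSpace ℝ H]
    (ξ : H) (hξ : ‖ξ‖ = 1)
    (T : H →L[ℝ] H) (hT : ∀ x y : H, ⟪T x, y⟫ = ⟪x, T y⟫)
    {ι : Type*} (s : Finset ι) (v : ι → H)
    (hv0 : ∀ r ∈ s, v r ≠ 0)
    (horth : ∀ r ∈ s, ∀ r' ∈ s, r ≠ r' → ⟪v r, v r'⟫ = 0)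
    (hvξ : ∀ r ∈ s, ⟪v r, ξ⟫ = 0) :
    ‖T ξ‖ ^ 2 - ⟪T ξ, ξ⟫ ^ 2 ≥ ∑ r ∈ s, ⟪T ξ, v r⟫ ^ 2 / ‖v r‖ ^ 2 := by
  classical
  set w : H := T ξ - ⟪T ξ, ξ⟫ • ξ with hw
  -- the normalized family
  set e : ↥s → H := fun r => (‖v (r : ι)‖)⁻¹ • v (r : ι) with he
  have hOrth : Orthonormal ℝ e := by
    rw [orthonormal_iff_ite]
    intro i j
    by_cases hij : i = j
    · subst hij
      have hv : ‖v (i : ι)‖ ≠ 0 := norm_ne_zero_iff.2 (hv0 i i.2)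
      rw [if_pos rfl, he]
      rw [real_inner_smul_left, real_inner_smul_right, real_inner_self_eq_norm_sq]
      field_simp
    · have : (i : ι) ≠ (j : ι) := fun h => hij (Subtype.ext h)
      simp [he, real_inner_smul_left, real_inner_smul_right,
        horth i i.2 j j.2 this, hij]
  have hbessel := hOrth.sum_inner_products_le (s := Finset.univ) w
  have hterm : ∀ r : ↥s, ‖⟪e r, w⟫‖ ^ 2 = ⟪T ξ, v (r : ι)⟫ ^ 2 / ‖v (r : ι)‖ ^ 2 := by
    intro r
    have hvw : ⟪v (r : ι), w⟫ = ⟪T ξ, v (r : ι)⟫ := by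
      simp [hw, inner_sub_right, real_inner_smul_right, hvξ r r.2,
        real_inner_comm (v (r : ι)) (T ξ)]
    have hv : ‖v (r : ι)‖ ≠ 0 := norm_ne_zero_iff.2 (hv0 r r.2)
    rw [he]
    simp only [real_inner_smul_left, hvw, Real.norm_eq_abs]
    rw [sq_abs]
    field_simp
  have hsum : ∑ r : ↥s, ‖⟪e r, w⟫‖ ^ 2
      = ∑ r ∈ s, ⟪T ξ, v r⟫ ^ 2 / ‖v r‖ ^ 2 := by
    rw [← s.sum_attach fun r => ⟪T ξ, v r⟫ ^ 2 / ‖v r‖ ^ 2]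
    exact Finset.sum_congr rfl fun r _ => hterm r
  have hnormw : ‖w‖ ^ 2 = ‖T ξ‖ ^ 2 - ⟪T ξ, ξ⟫ ^ 2 := by
    rw [hw, norm_sub_sq_real]
    simp [real_inner_smul_right, norm_smul, hξ, real_inner_self_eq_norm_sq]
    ring
  rw [hsum, hnormw] at hbessel
  exact hbessel
end

section
/- The canonical exponential family is the gradient-flow curve: Let T be a continuous self-adjoint operator on a real Hilbert space H and q ∈ H a unit vector. Then the curve ξ(θ) = exp(θT/2)q / ‖exp(θT/2)q‖ satisfies ‖ξ(θ)‖ = 1 for all θ, is differentiable, and solves the differential equation ξ'(θ) = (1/2)(T − τ(θ)·id)ξ(θ), where τ(θ) = ⟪Tξ(θ), ξ(θ)⟫. -/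
open scoped RealInnerProductSpace

open NormedSpace in
/-- **The canonical exponential family is the gradient-flow curve.** The normalised curve
`ξ θ = exp((θ/2) • T) q / ‖exp((θ/2) • T) q‖` through a unit vector `q` stays on the unit
sphere and solves `ξ'(θ) = (1/2)(T − τ(θ))ξ(θ)`, where `τ(θ) = ⟪Tξ(θ), ξ(θ)⟫`. -/
theorem exponential_family_gradient_flow {H : Type*}
    [NormedAddCommGroup H] [InnerProductSpace ℝ H] [CompleteSpace H]
    (T : H →L[ℝ] H) (hT : ∀ x y : H, ⟪T x, y⟫ = ⟪x, T y⟫)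
    (q : H) (hq : ‖q‖ = 1)
    (ξ : ℝ → H)
    (hξ : ∀ θ, ξ θ = ‖NormedSpace.exp ((θ / 2) • T) q‖⁻¹ • NormedSpace.exp ((θ / 2) • T) q) :
    ∀ θ, ‖ξ θ‖ = 1 ∧
      HasDerivAt ξ ((1 / 2 : ℝ) • (T (ξ θ) - ⟪T (ξ θ), ξ θ⟫ • ξ θ)) θ := by
  have hq0 : q ≠ 0 := by intro h; rw [h, norm_zero] at hq; norm_num at hq
  set A : H →L[ℝ] H := (1 / 2 : ℝ) • T with hA
  have hAeq : ∀ θ : ℝ, (θ / 2) • T = θ • A := by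
    intro θ; rw [hA, smul_smul]; ring_nf
  set u : ℝ → H := fun θ => exp (θ • A) q with hu
  have hξ' : ξ = fun θ => ‖u θ‖⁻¹ • u θ := by
    funext θ; rw [hξ θ, hu]; simp only [hAeq]
  -- u θ ≠ 0
  have hu0 : ∀ θ, u θ ≠ 0 := by
    intro θ h
    have hc : exp (-(θ • A)) * exp (θ • A) = 1 := by
      rw [← exp_add_of_commute_of_mem_ball (𝕂 := ℝ) ((Commute.refl (θ • A)).neg_left)
        ((expSeries_radius_eq_top ℝ (H →L[ℝ] H)).symm ▸ edist_lt_top _ _)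
        ((expSeries_radius_eq_top ℝ (H →L[ℝ] H)).symm ▸ edist_lt_top _ _), neg_add_cancel, exp_zero]
    have : exp (-(θ • A)) (u θ) = q := by
      rw [hu]
      have := congrArg (fun L : H →L[ℝ] H => L q) hc
      simpa using this
    rw [h] at this
    simp at this
    exact hq0 this.symm
  have hn0 : ∀ θ, ‖u θ‖ ≠ 0 := fun θ => norm_ne_zero_iff.mpr (hu0 θ)
  -- derivative of u
  have hud : ∀ θ, HasDerivAt u (A (u θ)) θ := by
    intro θ
    have h1 := hasDerivAt_exp_smul_const' (𝕂 := ℝ) A θ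
    have := h1.clm_apply (hasDerivAt_const θ q)
    simpa using this
  intro θ
  constructor
  · rw [hξ', norm_smul, norm_inv, norm_norm, inv_mul_cancel₀ (hn0 θ)]
  · -- derivative of the norm
    have hr : HasDerivAt (fun θ => ⟪u θ, u θ⟫) (⟪u θ, A (u θ)⟫ + ⟪A (u θ), u θ⟫) θ :=
      (hud θ).inner ℝ (hud θ)
    have hrpos : (0:ℝ) < ⟪u θ, u θ⟫ := by
      rw [real_inner_self_eq_norm_sq]
      exact pow_pos (norm_pos_iff.mpr (hu0 θ)) 2
    have hnd := (Real.hasDerivAt_sqrt (ne_of_gt hrpos)).comp θ hr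
    have hfun : (Real.sqrt ∘ fun θ => ⟪u θ, u θ⟫) = fun θ => ‖u θ‖ := by
      funext x
      simp [Function.comp, real_inner_self_eq_norm_sq, Real.sqrt_sq (norm_nonneg _)]
    have hsq : Real.sqrt ⟪u θ, u θ⟫ = ‖u θ‖ := by
      rw [real_inner_self_eq_norm_sq, Real.sqrt_sq (norm_nonneg _)]
    rw [hfun, hsq] at hnd
    have hinv := hnd.inv (hn0 θ)
    have hd := hinv.smul (hud θ)
    rw [hξ']
    convert hd using 1
    · rfl
    have hTu : ⟪u θ, A (u θ)⟫ = (1/2) * ⟪T (u θ), u θ⟫ := by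
      rw [hA]; simp [real_inner_smul_right, real_inner_comm]
    have hTu' : ⟪A (u θ), u θ⟫ = (1/2) * ⟪T (u θ), u θ⟫ := by
      rw [hA]; simp [real_inner_smul_left]
    have hAu : A (u θ) = (1/2 : ℝ) • T (u θ) := by rw [hA]; simp
    rw [hTu, hTu', hAu, map_smul, real_inner_smul_left, real_inner_smul_right]
    have h3 : ‖u θ‖ ≠ 0 := hn0 θ
    simp only [Pi.inv_apply]
    match_scalars <;> (field_simp <;> ring_nf) <;> tauto
end

section
/- Uniqueness of the exponential family (the unique curve through q everywhere orthogonal to the foliation by level surfaces of the estimator function): Let T be a continuous self-adjoint operator on a real Hilbert space H and q ∈ H a unit vector. Suppose η : ℝ → H is differentiable, satisfies η(0) = q, ‖η(θ)‖ = 1 for all θ, and η'(θ) = (1/2)(T − ⟪Tη(θ), η(θ)⟫·id)η(θ) for all θ. Then η(θ) = exp(θT/2)q / ‖exp(θT/2)q‖ for all θ. -/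
open scoped RealInnerProductSpace
set_option synthInstance.maxHeartbeats 1000000
set_option maxHeartbeats 1000000

/-- **Uniqueness of the canonical exponential family.** Any differentiable curve of unit
vectors through `q` whose velocity is everywhere parallel to the gradient of the estimator
function, i.e. solving `η'(θ) = (1/2)(T − ⟪Tη, η⟫)η`, coincides with the canonical
exponential family `θ ↦ exp((θ/2) • T) q / ‖exp((θ/2) • T) q‖`. -/
theorem exponential_family_unique {H : Type*}
    [NormedAddCommGroup H] [InnerProductSpace ℝ H] [CompleteSpace H]
    (T : H →L[ℝ] H) (hT : ∀ x y : H, ⟪T x, y⟫ = ⟪x, T y⟫)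
    (q : H) (hq : ‖q‖ = 1)
    (η : ℝ → H) (h0 : η 0 = q) (hnorm : ∀ θ, ‖η θ‖ = 1)
    (hode : ∀ θ, HasDerivAt η ((1 / 2 : ℝ) • (T (η θ) - ⟪T (η θ), η θ⟫ • η θ)) θ) :
    ∀ θ, η θ = ‖NormedSpace.exp ((θ / 2) • T) q‖⁻¹ • NormedSpace.exp ((θ / 2) • T) q := by
  classical
  set A : H →L[ℝ] H := (1 / 2 : ℝ) • T with hA
  have hηc : Continuous η := by
    refine continuous_iff_continuousAt.mpr fun θ => (hode θ).continuousAt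
  set a : ℝ → ℝ := fun s => (1 / 2 : ℝ) * ⟪T (η s), η s⟫ with ha_def
  have hac : Continuous a := by
    exact continuous_const.mul ((T.continuous.comp hηc).inner hηc)
  set g : ℝ → ℝ := fun θ => ∫ s in (0 : ℝ)..θ, a s with hg_def
  have hg : ∀ θ, HasDerivAt g (a θ) θ := fun θ =>
    intervalIntegral.integral_hasDerivAt_right (hac.intervalIntegrable _ _)
      (hac.aestronglyMeasurable.stronglyMeasurableAtFilter) hac.continuousAt
  set u : ℝ → H := fun θ => Real.exp (g θ) • η θ with hu_def
  have hu : ∀ θ, HasDerivAt u (A (u θ)) θ := by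
    intro θ
    have hc : HasDerivAt (fun θ => Real.exp (g θ)) (Real.exp (g θ) * a θ) θ := (hg θ).exp
    have := hc.smul (hode θ)
    refine (this.congr_deriv ?_ : HasDerivAt u _ θ)
    simp only [hu_def, ha_def, hA, ContinuousLinearMap.smul_apply, ContinuousLinearMap.map_smul,
      smul_sub]
    match_scalars <;> ring
  -- v is constant
  set v : ℝ → H := fun θ => NormedSpace.exp ((-θ) • A) (u θ) with hv_def
  have hexp : ∀ θ : ℝ, HasDerivAt (fun θ : ℝ => NormedSpace.exp ((-θ) • A))
      ((-1 : ℝ) • (NormedSpace.exp ((-θ) • A) * A)) θ := by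
    intro θ
    have h1 : HasDerivAt (fun θ : ℝ => -θ) (-1 : ℝ) θ := (hasDerivAt_id θ).neg
    exact (hasDerivAt_exp_smul_const (𝕂 := ℝ) A (-θ)).scomp θ h1
  have hv : ∀ θ, HasDerivAt v 0 θ := by
    intro θ
    have := (hexp θ).clm_apply (hu θ)
    convert this using 1
    simp [ContinuousLinearMap.mul_apply]
  have hvconst : ∀ θ, v θ = v 0 := by
    intro θ
    have hdiff : Differentiable ℝ v := fun θ => (hv θ).differentiableAt
    have : ∀ θ, deriv v θ = 0 := fun θ => (hv θ).deriv
    exact is_const_of_deriv_eq_zero hdiff this θ 0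
  have hv0 : v 0 = q := by
    simp [hv_def, hu_def, hg_def, h0]
  have huexp : ∀ θ, u θ = NormedSpace.exp (θ • A) q := by
    intro θ
    have h1 : NormedSpace.exp (θ • A) * NormedSpace.exp ((-θ) • A) = 1 := by
      rw [← NormedSpace.exp_add_of_commute_of_mem_ball (𝕂 := ℝ) (x := θ • A) (y := (-θ) • A)
        (hx := (NormedSpace.expSeries_radius_eq_top ℝ (H →L[ℝ] H)).symm ▸ edist_lt_top _ _)
        (hy := (NormedSpace.expSeries_radius_eq_top ℝ (H →L[ℝ] H)).symm ▸ edist_lt_top _ _)]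
      · simp
      · exact (Commute.refl A).smul_left θ |>.smul_right (-θ)
    have h2 : NormedSpace.exp (θ • A) (v θ) = NormedSpace.exp (θ • A) q := by
      rw [hvconst θ, hv0]
    have h3 : NormedSpace.exp (θ • A) (NormedSpace.exp ((-θ) • A) (u θ)) = u θ := by
      rw [← ContinuousLinearMap.comp_apply, ← ContinuousLinearMap.mul_def, h1,
        ContinuousLinearMap.one_apply]
    rw [← h3]
    exact h2
  intro θ
  have hAθ : (θ / 2) • T = θ • A := by
    rw [hA, smul_smul]; ring_nf
  have hnu : ‖NormedSpace.exp ((θ / 2) • T) q‖ = Real.exp (g θ) := by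
    rw [hAθ, ← huexp, hu_def]
    simp [norm_smul, Real.abs_exp, hnorm θ]
  rw [hnu, hAθ, ← huexp, hu_def]
  rw [smul_smul, inv_mul_cancel₀ (Real.exp_pos _).ne', one_smul]
end

section
/- The exponential family attains the Cramér–Rao bound with equality: Let T be a continuous self-adjoint operator on a real Hilbert space H, q ∈ H a unit vector, and ξ(θ) = exp(θT/2)q / ‖exp(θT/2)q‖ the canonical exponential family, with τ(θ) = ⟪Tξ(θ), ξ(θ)⟫. Then for every θ, τ'(θ) = Var_{ξ(θ)}[T] and the Fisher information satisfies 4‖ξ'(θ)‖² = Var_{ξ(θ)}[T]; consequently Var_{ξ(θ)}[T] · 4‖ξ'(θ)‖² = (τ'(θ))², i.e. equality holds in the Cramér–Rao inequality. -/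
open scoped RealInnerProductSpace

/-- **The exponential family attains the Cramér–Rao bound with equality.** Along the
canonical exponential family `ξ θ = exp((θ/2) • T) q / ‖exp((θ/2) • T) q‖` with
`τ θ = ⟪Tξ(θ), ξ(θ)⟫`, one has `τ'(θ) = Var_{ξ(θ)}[T]`, the Fisher information satisfies
`4‖ξ'(θ)‖² = Var_{ξ(θ)}[T]`, and hence `Var_{ξ(θ)}[T]·4‖ξ'(θ)‖² = (τ'(θ))²`. -/
theorem exponential_family_attains_cramer_rao {H : Type*}
    [NormedAddCommGroup H] [InnerProductSpace ℝ H] [CompleteSpace H]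
    (T : H →L[ℝ] H) (hT : ∀ x y : H, ⟪T x, y⟫ = ⟪x, T y⟫)
    (q : H) (hq : ‖q‖ = 1)
    (ξ : ℝ → H)
    (hξ : ∀ θ, ξ θ = ‖NormedSpace.exp ((θ / 2) • T) q‖⁻¹ • NormedSpace.exp ((θ / 2) • T) q)
    (τ : ℝ → ℝ) (hτ : ∀ θ, τ θ = ⟪T (ξ θ), ξ θ⟫) :
    ∀ θ, deriv τ θ = ‖T (ξ θ)‖ ^ 2 - ⟪T (ξ θ), ξ θ⟫ ^ 2 ∧
      4 * ‖deriv ξ θ‖ ^ 2 = ‖T (ξ θ)‖ ^ 2 - ⟪T (ξ θ), ξ θ⟫ ^ 2 ∧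
      (‖T (ξ θ)‖ ^ 2 - ⟪T (ξ θ), ξ θ⟫ ^ 2) * (4 * ‖deriv ξ θ‖ ^ 2) = (deriv τ θ) ^ 2 := by
  intro θ
  set u : ℝ → H := fun t => NormedSpace.exp ((t / 2) • T) q with hu_def
  have he : HasDerivAt (fun s : ℝ => NormedSpace.exp ((s / 2) • T))
      ((2:ℝ)⁻¹ • (T * NormedSpace.exp ((θ / 2) • T))) θ := by
    have h1 := hasDerivAt_exp_smul_const' (𝕂 := ℝ) T (θ / 2)
    have h2 : HasDerivAt (fun s : ℝ => s / 2) (2⁻¹ : ℝ) θ := by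
      simpa using (hasDerivAt_id θ).div_const 2
    simpa [Function.comp_def] using h1.scomp θ h2
  have hu : HasDerivAt u ((2:ℝ)⁻¹ • T (u θ)) θ := by
    have := he.clm_apply (hasDerivAt_const θ q)
    simpa [hu_def] using this
  have hune : u θ ≠ 0 := by
    intro h
    have h1 : NormedSpace.exp (-((θ/2) • T)) * NormedSpace.exp ((θ/2) • T) = 1 := by
      have h2 := NormedSpace.exp_add_of_commute_of_mem_ball (𝕂 := ℝ) ((Commute.refl ((θ/2) • T)).neg_left)
        ((NormedSpace.expSeries_radius_eq_top ℝ (H →L[ℝ] H)).symm ▸ edist_lt_top _ _)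
        ((NormedSpace.expSeries_radius_eq_top ℝ (H →L[ℝ] H)).symm ▸ edist_lt_top _ _)
      rw [neg_add_cancel, NormedSpace.exp_zero] at h2
      exact h2.symm
    have h2 : q = NormedSpace.exp (-((θ/2) • T)) (u θ) := by
      rw [hu_def]
      simp only [← ContinuousLinearMap.mul_apply, h1, ContinuousLinearMap.one_apply]
    rw [h, map_zero] at h2
    rw [h2, norm_zero] at hq
    norm_num at hq
  have hnpos : (0:ℝ) < ‖u θ‖ := norm_pos_iff.mpr hune
  have hnne : ‖u θ‖ ≠ 0 := ne_of_gt hnpos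
  have hr : HasDerivAt (fun t => ⟪u t, u t⟫) (⟪T (u θ), u θ⟫) θ := by
    have h := hu.inner ℝ hu
    refine h.congr_deriv ?_
    rw [real_inner_smul_right, real_inner_smul_left, real_inner_comm (u θ) (T (u θ))]
    ring
  have hrpos : (0:ℝ) < ⟪u θ, u θ⟫ := by
    rw [real_inner_self_eq_norm_sq]
    positivity
  have hn : HasDerivAt (fun t => ‖u t‖) (⟪T (u θ), u θ⟫ / (2 * ‖u θ‖)) θ := by
    have h := (Real.hasDerivAt_sqrt (ne_of_gt hrpos)).comp θ hr
    have heq : (fun t => Real.sqrt ⟪u t, u t⟫) = fun t => ‖u t‖ := by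
      funext t
      rw [real_inner_self_eq_norm_mul_norm, Real.sqrt_mul_self (norm_nonneg _)]
    have hs : Real.sqrt ⟪u θ, u θ⟫ = ‖u θ‖ := by
      rw [real_inner_self_eq_norm_mul_norm, Real.sqrt_mul_self (norm_nonneg _)]
    rw [Function.comp_def, heq, hs] at h
    refine h.congr_deriv ?_
    ring
  have hξd : HasDerivAt ξ ((2:ℝ)⁻¹ • (T (ξ θ) - ⟪T (ξ θ), ξ θ⟫ • ξ θ)) θ := by
    have h := ((hn.inv hnne).smul hu)
    have heq : ((fun t => ‖u t‖)⁻¹ • u) = ξ := by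
      funext t; exact (hξ t).symm
    rw [heq] at h
    have hxi : ξ θ = ‖u θ‖⁻¹ • u θ := hξ θ
    convert h using 1
    rw [hxi]
    simp only [map_smul, real_inner_smul_left, real_inner_smul_right, smul_smul, smul_sub,
      sub_smul, neg_div, Pi.inv_apply]
    set n := ‖u θ‖ with hndef
    set c : ℝ := ⟪T (u θ), u θ⟫ with hcdef
    match_scalars
    · field_simp
    · field_simp
  have hderiv_ξ : deriv ξ θ = (2:ℝ)⁻¹ • (T (ξ θ) - ⟪T (ξ θ), ξ θ⟫ • ξ θ) := hξd.deriv
  have hξnorm : ‖ξ θ‖ = 1 := by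
    rw [hξ θ]
    rw [show ‖NormedSpace.exp ((θ/2) • T) q‖ = ‖u θ‖ from rfl]
    rw [norm_smul, norm_inv, norm_norm, inv_mul_cancel₀ hnne]
  set v := ξ θ with hv
  set t0 : ℝ := ⟪T v, v⟫ with ht0
  have hval : ⟪T v, (2:ℝ)⁻¹ • (T v - t0 • v)⟫ + ⟪T ((2:ℝ)⁻¹ • (T v - t0 • v)), v⟫
      = ‖T v‖ ^ 2 - t0 ^ 2 := by
    rw [hT ((2:ℝ)⁻¹ • (T v - t0 • v)) v, real_inner_comm ((2:ℝ)⁻¹ • (T v - t0 • v)) (T v)]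
    simp only [real_inner_smul_left, inner_sub_left, real_inner_smul_left]
    rw [real_inner_self_eq_norm_sq, real_inner_comm (T v) v, ht0]
    ring
  have hτd : HasDerivAt τ (‖T v‖ ^ 2 - t0 ^ 2) θ := by
    have hTξ : HasDerivAt (fun t => T (ξ t)) (T ((2:ℝ)⁻¹ • (T v - t0 • v))) θ :=
      T.hasFDerivAt.comp_hasDerivAt θ hξd
    have h := hTξ.inner ℝ hξd
    have heq : (fun t => ⟪T (ξ t), ξ t⟫) = τ := by funext t; rw [hτ t]
    rw [heq] at h
    refine h.congr_deriv ?_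
    rw [← hv]
    exact hval
  have hdτ : deriv τ θ = ‖T v‖ ^ 2 - t0 ^ 2 := hτd.deriv
  have hnormd : 4 * ‖deriv ξ θ‖ ^ 2 = ‖T v‖ ^ 2 - t0 ^ 2 := by
    rw [hderiv_ξ, norm_smul, mul_pow, norm_sub_sq_real, real_inner_smul_right, ← ht0,
      norm_smul, hξnorm]
    simp only [norm_inv, Real.norm_ofNat, Real.norm_eq_abs, mul_one, sq_abs]
    norm_num
    ring
  refine ⟨hdτ, hnormd, ?_⟩
  rw [hdτ, hnormd]
  ring
end

section
/- Fisher information matrix of a multi-parameter exponential family equals the covariance matrix of the estimators: Let T₁, …, T_r be pairwise commuting continuous self-adjoint operators on a real Hilbert space H and q ∈ H a unit vector. Define ξ(θ) = exp((1/2)Σ_{j=1}^{r} θ^j T_j) q / ‖exp((1/2)Σ_{j=1}^{r} θ^j T_j) q‖ for θ ∈ ℝ^r. Then the partial derivatives ∂_iξ(θ) exist and for all i, j: 4⟪∂_iξ(θ), ∂_jξ(θ)⟫ = Cov_{ξ(θ)}[T_i, T_j]. -/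
set_option maxHeartbeats 1000000
set_option synthInstance.maxHeartbeats 400000


open scoped RealInnerProductSpace

/-- **Fisher information matrix of a multi-parameter exponential family equals the
covariance matrix of the estimators.** For pairwise commuting continuous self-adjoint
operators `T j` and the normalised family
`ξ θ = exp((1/2)Σⱼ θʲ Tⱼ) q / ‖exp((1/2)Σⱼ θʲ Tⱼ) q‖`, the family is differentiable and
`4⟪∂ᵢξ, ∂ⱼξ⟫ = Cov_{ξ θ}[Tᵢ, Tⱼ]` for all `i, j`. -/
theorem exponential_family_fisher_eq_covariance {H : Type*}
    [NormedAddCommGroup H] [InnerProductSpace ℝ H] [CompleteSpace H] {r : ℕ}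
    (T : Fin r → H →L[ℝ] H) (hT : ∀ j, ∀ x y : H, ⟪T j x, y⟫ = ⟪x, T j y⟫)
    (hcomm : ∀ i j, Commute (T i) (T j))
    (q : H) (hq : ‖q‖ = 1)
    (ξ : (Fin r → ℝ) → H)
    (hξ : ∀ θ : Fin r → ℝ, ξ θ =
      ‖NormedSpace.exp ((1 / 2 : ℝ) • ∑ j, θ j • T j) q‖⁻¹ •
        NormedSpace.exp ((1 / 2 : ℝ) • ∑ j, θ j • T j) q)
    (θ : Fin r → ℝ) :
    DifferentiableAt ℝ ξ θ ∧ ∀ i j,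
      4 * ⟪fderiv ℝ ξ θ (Pi.single i 1), fderiv ℝ ξ θ (Pi.single j 1)⟫ =
        ⟪T i (ξ θ) - ⟪T i (ξ θ), ξ θ⟫ • ξ θ, T j (ξ θ) - ⟪T j (ξ θ), ξ θ⟫ • ξ θ⟫ := by
  classical
  letI : NormedAlgebra ℚ (H →L[ℝ] H) := .restrictScalars ℚ ℝ _
  set Lm : (Fin r → ℝ) →L[ℝ] (H →L[ℝ] H) :=
    (1/2 : ℝ) • ∑ j, (ContinuousLinearMap.proj j).smulRight (T j) with hLm
  have hLm_apply : ∀ t : Fin r → ℝ, Lm t = (1/2 : ℝ) • ∑ j, t j • T j := by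
    intro t
    simp [hLm, ContinuousLinearMap.sum_apply]
  -- commutation facts
  have hTA : ∀ i t, Commute (Lm t) (T i) := by
    intro i t
    rw [hLm_apply]
    exact Commute.smul_left
      (Commute.sum_left _ _ _ fun j _ => Commute.smul_left (hcomm j i) _) _
  have hAA : ∀ s t, Commute (Lm s) (Lm t) := by
    intro s t
    rw [hLm_apply t]
    exact Commute.smul_right
      (Commute.sum_right _ _ _ fun j _ => Commute.smul_right (hTA j s) _) _
  set f : (Fin r → ℝ) → H := fun t => NormedSpace.exp (Lm t) q with hf
  set u : H := NormedSpace.exp (Lm θ) q with hu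
  have hq0 : q ≠ 0 := by
    intro h; rw [h, norm_zero] at hq; norm_num at hq
  have hune : u ≠ 0 := by
    intro h0
    have h1 : NormedSpace.exp (-(Lm θ)) (NormedSpace.exp (Lm θ) q) = q := by
      rw [← ContinuousLinearMap.mul_apply,
        ← NormedSpace.exp_add_of_commute ((Commute.refl (Lm θ)).neg_left),
        neg_add_cancel, NormedSpace.exp_zero, ContinuousLinearMap.one_apply]
    rw [← hu, h0, map_zero] at h1
    exact hq0 h1.symm
  have hnu : ‖u‖ ≠ 0 := norm_ne_zero_iff.mpr hune
  -- derivative of f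
  have hexp_eq : f = fun t =>
      NormedSpace.exp (Lm θ) (NormedSpace.exp (Lm (t - θ)) q) := by
    funext t
    rw [hf, ← ContinuousLinearMap.mul_apply,
      ← NormedSpace.exp_add_of_commute (hAA θ (t - θ)), ← map_add]
    congr 2
    abel
  set Df : (Fin r → ℝ) →L[ℝ] H :=
    (NormedSpace.exp (Lm θ)).comp ((ContinuousLinearMap.apply ℝ H q).comp Lm) with hDf
  have hdf : HasFDerivAt f Df θ := by
    rw [hexp_eq]
    have h1 : HasFDerivAt (fun t : Fin r → ℝ => Lm (t - θ)) Lm θ := by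
      have := Lm.hasFDerivAt.comp θ ((hasFDerivAt_id θ).sub_const θ)
      rwa [ContinuousLinearMap.comp_id] at this
    have h0 : HasFDerivAt (NormedSpace.exp : (H →L[ℝ] H) → (H →L[ℝ] H))
        (1 : (H →L[ℝ] H) →L[ℝ] (H →L[ℝ] H)) (Lm (θ - θ)) := by
      rw [sub_self, map_zero]
      exact hasFDerivAt_exp_zero
    have h2 : HasFDerivAt (fun t : Fin r → ℝ => NormedSpace.exp (Lm (t - θ))) Lm θ := by
      have := h0.comp θ h1
      rwa [ContinuousLinearMap.one_def, ContinuousLinearMap.id_comp] at this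
    have h3 := (ContinuousLinearMap.apply ℝ H q).hasFDerivAt.comp θ h2
    exact (NormedSpace.exp (Lm θ)).hasFDerivAt.comp θ h3
  have hfθ : f θ = u := rfl
  -- derivative of the norm
  have hn2 : HasFDerivAt (fun t => ‖f t‖ ^ 2)
      (2 • (innerSL ℝ u).comp Df) θ := hfθ ▸ hdf.norm_sq
  have hsq := hn2.sqrt (by positivity : ‖f θ‖ ^ 2 ≠ 0)
  have hnorm : HasFDerivAt (fun t => ‖f t‖)
      ((1 / (2 * ‖u‖)) • (2 • (innerSL ℝ u).comp Df)) θ := by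
    have heq : (fun t => Real.sqrt (‖f t‖ ^ 2)) = fun t => ‖f t‖ := by
      funext t; exact Real.sqrt_sq (norm_nonneg _)
    rw [heq] at hsq
    rw [hfθ, Real.sqrt_sq (norm_nonneg _)] at hsq
    exact hsq
  have hfn : ‖f θ‖ ≠ 0 := by rw [hfθ]; exact hnu
  have hinv : HasFDerivAt (fun t => ‖f t‖⁻¹)
      (-(‖f θ‖ ^ 2)⁻¹ • ((1 / (2 * ‖u‖)) • (2 • (innerSL ℝ u).comp Df))) θ :=
    (hasDerivAt_inv hfn).comp_hasFDerivAt θ hnorm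
  set Ξ : (Fin r → ℝ) →L[ℝ] H :=
    ‖f θ‖⁻¹ • Df +
      (-(‖f θ‖ ^ 2)⁻¹ • ((1 / (2 * ‖u‖)) • (2 • (innerSL ℝ u).comp Df))).smulRight (f θ)
    with hΞdef
  have hξfun : ξ = fun t => ‖f t‖⁻¹ • f t := by
    funext t
    rw [hξ t, hf]
    simp only [hLm_apply]
  have hΞ : HasFDerivAt ξ Ξ θ := by
    rw [hξfun]
    exact hinv.smul hdf
  -- evaluate the derivative on basis vectors
  have hLsingle : ∀ i, Lm (Pi.single i 1) = (2⁻¹ : ℝ) • T i := by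
    intro i
    rw [hLm_apply]
    norm_num
  have hcommexp : ∀ i, NormedSpace.exp (Lm θ) (T i q) = T i u := by
    intro i
    have h := ((hTA i θ).exp_left).eq
    calc NormedSpace.exp (Lm θ) (T i q)
        = (NormedSpace.exp (Lm θ) * T i) q := rfl
      _ = (T i * NormedSpace.exp (Lm θ)) q := by rw [h]
      _ = T i u := rfl
  have hDfi : ∀ i, Df (Pi.single i 1) = (2⁻¹ : ℝ) • T i u := by
    intro i
    have h1 : Df (Pi.single i 1)
        = NormedSpace.exp (Lm θ) ((2⁻¹ : ℝ) • T i q) := by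
      show NormedSpace.exp (Lm θ) ((Lm (Pi.single i 1)) q) = _
      rw [hLsingle]
      rfl
    rw [h1, map_smul, hcommexp]
  have hξθ : ξ θ = ‖u‖⁻¹ • u := by rw [hξfun]
  have hXi : ∀ i, Ξ (Pi.single i 1) =
      (2⁻¹ : ℝ) • (T i (ξ θ) - ⟪T i (ξ θ), ξ θ⟫ • ξ θ) := by
    intro i
    rw [hΞdef, hξθ]
    simp only [ContinuousLinearMap.add_apply, ContinuousLinearMap.smul_apply,
      ContinuousLinearMap.smulRight_apply, ContinuousLinearMap.comp_apply,
      innerSL_apply_apply, hDfi, hfθ, map_smul, smul_sub]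
    simp only [real_inner_smul_left, real_inner_smul_right, smul_eq_mul, nsmul_eq_mul]
    rw [real_inner_comm u (T i u)]
    match_scalars
    · field_simp
    · field_simp
  refine ⟨hΞ.differentiableAt, fun i j => ?_⟩
  rw [hΞ.fderiv, hXi i, hXi j, real_inner_smul_left, real_inner_smul_right]
  ring
end

section
/- Curvature of the exponential family: Let T be a continuous self-adjoint operator on a real Hilbert space H, q a unit vector, and ξ(θ) = exp(θT/2)q / ‖exp(θT/2)q‖ the canonical exponential family with τ(θ) = ⟪Tξ(θ), ξ(θ)⟫. Write μ_k(θ) = ⟪(T − τ(θ)·id)^k ξ(θ), ξ(θ)⟫ for the central moments of T, and assume μ₂(θ) > 0. Define the projected second derivative ξ̂⁽²⁾(θ) = ξ''(θ) − (⟪ξ''(θ), ξ'(θ)⟫/‖ξ'(θ)‖²)·ξ'(θ) − ⟪ξ''(θ), ξ(θ)⟫·ξ(θ). Then ‖ξ̂⁽²⁾(θ)‖² = ‖ξ'(θ)‖⁴ · K², where K² = μ₄/μ₂² − μ₃²/μ₂³ − 1 (kurtosis minus squared skewness minus one). -/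
open scoped RealInnerProductSpace

set_option synthInstance.maxHeartbeats 1000000
set_option maxHeartbeats 1000000

private lemma aux_norm_hasDerivAt {H : Type*} [NormedAddCommGroup H] [InnerProductSpace ℝ H]
    {g : ℝ → H} {g' : H} {θ : ℝ} (hg : HasDerivAt g g' θ) (h0 : g θ ≠ 0) :
    HasDerivAt (fun t => ‖g t‖) (⟪g θ, g'⟫ / ‖g θ‖) θ := by
  have h2 : HasDerivAt (fun t => ‖g t‖ ^ 2) (2 * ⟪g θ, g'⟫) θ := hg.norm_sq
  have hs : HasDerivAt Real.sqrt (1 / (2 * Real.sqrt (‖g θ‖ ^ 2))) (‖g θ‖ ^ 2) :=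
    Real.hasDerivAt_sqrt (pow_ne_zero 2 (norm_ne_zero_iff.2 h0))
  have h3 := hs.comp θ h2
  simp only [Function.comp_def, Real.sqrt_sq (norm_nonneg _)] at h3
  refine h3.congr_deriv ?_
  have : ‖g θ‖ ≠ 0 := norm_ne_zero_iff.2 h0
  field_simp

private lemma aux_exp_hasDerivAt {H : Type*} [NormedAddCommGroup H] [InnerProductSpace ℝ H]
    [CompleteSpace H] (T : H →L[ℝ] H) (q : H) (t : ℝ) :
    HasDerivAt (fun s : ℝ => NormedSpace.exp ((s / 2) • T) q)
      ((1/2 : ℝ) • T (NormedSpace.exp ((t / 2) • T) q)) t := by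
  have h1 : HasDerivAt (fun s : ℝ => NormedSpace.exp (s • T))
      (T * NormedSpace.exp ((t/2) • T)) (t/2) :=
    hasDerivAt_exp_smul_const' T (t/2)
  have h2 : HasDerivAt (fun s : ℝ => s / 2) (1/2 : ℝ) t := by
    simpa using (hasDerivAt_id t).div_const 2
  have h3 := h1.scomp t h2
  have h4 := h3.clm_apply (hasDerivAt_const t q)
  simpa using h4

private lemma aux_exp_ne_zero {H : Type*} [NormedAddCommGroup H] [InnerProductSpace ℝ H]
    [CompleteSpace H] (T : H →L[ℝ] H) {q : H} (hq : ‖q‖ = 1) (t : ℝ) :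
    NormedSpace.exp ((t / 2) • T) q ≠ 0 := by
  intro h
  have hc : Commute ((-(t/2)) • T) ((t/2) • T) := by
    unfold Commute SemiconjBy
    rw [smul_mul_smul_comm, smul_mul_smul_comm, mul_comm]
  letI : NormedAlgebra ℚ (H →L[ℝ] H) := NormedAlgebra.restrictScalars ℚ ℝ (H →L[ℝ] H)
  have h5 := NormedSpace.exp_add_of_commute hc
  rw [neg_smul, neg_add_cancel] at h5
  have hq0 : (NormedSpace.exp ((-(t/2)) • T) * NormedSpace.exp ((t/2) • T)) q = q := by
    rw [show ((-(t/2)) • T) = -((t/2) • T) from neg_smul _ _, ← h5]; simp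
  rw [ContinuousLinearMap.mul_apply, h, map_zero] at hq0
  rw [← hq0] at hq
  simp at hq

/-- **Curvature of the exponential family.** Along the canonical exponential family
`ξ θ = exp((θ/2) • T) q / ‖exp((θ/2) • T) q‖` with `τ θ = ⟪Tξ(θ), ξ(θ)⟫` and central
moments `μ_k = ⟪(T − τ)^k ξ, ξ⟫`, the projection `ξ̂⁽²⁾` of `ξ''` orthogonal to `ξ` and
`ξ'` satisfies `‖ξ̂⁽²⁾‖² = ‖ξ'‖⁴·K²` with `K² = μ₄/μ₂² − μ₃²/μ₂³ − 1`. -/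
theorem exponential_family_curvature {H : Type*}
    [NormedAddCommGroup H] [InnerProductSpace ℝ H] [CompleteSpace H]
    (T : H →L[ℝ] H) (hT : ∀ x y : H, ⟪T x, y⟫ = ⟪x, T y⟫)
    (q : H) (hq : ‖q‖ = 1)
    (ξ : ℝ → H)
    (hξ : ∀ θ, ξ θ = ‖NormedSpace.exp ((θ / 2) • T) q‖⁻¹ • NormedSpace.exp ((θ / 2) • T) q)
    (θ : ℝ) (τ μ₂ μ₃ μ₄ : ℝ)
    (hτ : τ = ⟪T (ξ θ), ξ θ⟫)
    (hμ₂ : μ₂ = ⟪(((T - τ • 1 : H →L[ℝ] H)) ^ 2) (ξ θ), ξ θ⟫)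
    (hμ₃ : μ₃ = ⟪(((T - τ • 1 : H →L[ℝ] H)) ^ 3) (ξ θ), ξ θ⟫)
    (hμ₄ : μ₄ = ⟪(((T - τ • 1 : H →L[ℝ] H)) ^ 4) (ξ θ), ξ θ⟫)
    (hμ₂pos : 0 < μ₂) :
    ‖deriv (deriv ξ) θ - (⟪deriv (deriv ξ) θ, deriv ξ θ⟫ / ‖deriv ξ θ‖ ^ 2) • deriv ξ θ -
        ⟪deriv (deriv ξ) θ, ξ θ⟫ • ξ θ‖ ^ 2 =
      ‖deriv ξ θ‖ ^ 4 * (μ₄ / μ₂ ^ 2 - μ₃ ^ 2 / μ₂ ^ 3 - 1) := by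
  set g : ℝ → H := fun t => NormedSpace.exp ((t / 2) • T) q with hg
  have hgd : ∀ t, HasDerivAt g ((1/2 : ℝ) • T (g t)) t := fun t => aux_exp_hasDerivAt T q t
  have hg0 : ∀ t, g t ≠ 0 := fun t => aux_exp_ne_zero T hq t
  have hgn : ∀ t, ‖g t‖ ≠ 0 := fun t => norm_ne_zero_iff.2 (hg0 t)
  have hξeq : ξ = fun t => ‖g t‖⁻¹ • g t := funext hξ
  -- the tilt function
  set τf : ℝ → ℝ := fun t => ⟪T (ξ t), ξ t⟫ with hτf
  -- first derivative of ξ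
  have hξd : ∀ t, HasDerivAt ξ ((1/2 : ℝ) • (T (ξ t) - τf t • ξ t)) t := by
    intro t
    have hn : HasDerivAt (fun s => ‖g s‖) (⟪g t, (1/2 : ℝ) • T (g t)⟫ / ‖g t‖) t :=
      aux_norm_hasDerivAt (hgd t) (hg0 t)
    have hninv : HasDerivAt (fun s => ‖g s‖⁻¹)
        (-(⟪g t, (1/2 : ℝ) • T (g t)⟫ / ‖g t‖) / (‖g t‖ ^ 2)) t := hn.inv (hgn t)
    have hsm := hninv.smul (hgd t)
    rw [hξeq]
    refine hsm.congr_deriv ?_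
    simp only [hτf, hξeq, map_smul, real_inner_smul_left, real_inner_smul_right]
    rw [real_inner_comm (T (g t)) (g t)]
    have hn0 := hgn t
    match_scalars <;> field_simp <;> (try ring) <;> tauto
  -- abbreviations at the point θ
  obtain ⟨u, hu⟩ : ∃ x : H, x = ξ θ := ⟨_, rfl⟩
  rw [← hu] at hτ hμ₂ hμ₃ hμ₄ ⊢
  obtain ⟨a, ha⟩ : ∃ x : H, x = T u - τ • u := ⟨_, rfl⟩
  obtain ⟨b, hb⟩ : ∃ x : H, x = T a - τ • a := ⟨_, rfl⟩
  have hτθ : τf θ = τ := by rw [hτ, hτf, hu]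
  -- derivative at θ in terms of a
  have hξdθ : HasDerivAt ξ ((1/2 : ℝ) • a) θ := by
    have h := hξd θ; rwa [← hu, hτθ, ← ha] at h
  -- norm of ξ
  have hun : ‖u‖ = 1 := by
    rw [hu, hξeq]
    simp only [norm_smul, norm_inv, norm_norm]
    exact inv_mul_cancel₀ (hgn θ)
  have huu : ⟪u, u⟫ = 1 := by
    rw [real_inner_self_eq_norm_sq, hun]; norm_num
  -- adjointness of A = T - τ•1
  have hA : ∀ x y : H, ⟪T x - τ • x, y⟫ = ⟪x, T y - τ • y⟫ := by
    intro x y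
    simp only [inner_sub_left, inner_sub_right, real_inner_smul_left, real_inner_smul_right]
    rw [hT]
  -- inner product facts
  have hau : ⟪a, u⟫ = 0 := by
    rw [ha, inner_sub_left, real_inner_smul_left, huu, ← hτ]; ring
  have hua : ⟪u, a⟫ = 0 := by rw [real_inner_comm]; exact hau
  -- powers of the operator
  have hAop : ∀ x : H, (T - τ • 1 : H →L[ℝ] H) x = T x - τ • x := by
    intro x
    simp [ContinuousLinearMap.sub_apply, ContinuousLinearMap.smul_apply,
      ContinuousLinearMap.one_apply]
  have hA1 : (T - τ • 1 : H →L[ℝ] H) u = a := by rw [hAop, ha]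
  have hA2 : ((T - τ • 1 : H →L[ℝ] H) ^ 2) u = b := by
    rw [pow_two, ContinuousLinearMap.mul_apply, hA1, hAop, hb]
  have hA3 : ((T - τ • 1 : H →L[ℝ] H) ^ 3) u = T b - τ • b := by
    rw [pow_succ', ContinuousLinearMap.mul_apply, hA2, hAop]
  have hA4 : ((T - τ • 1 : H →L[ℝ] H) ^ 4) u = T (T b - τ • b) - τ • (T b - τ • b) := by
    rw [pow_succ', ContinuousLinearMap.mul_apply, hA3, hAop]
  have hbu : ⟪b, u⟫ = μ₂ := by rw [hμ₂, hA2]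
  have hub : ⟪u, b⟫ = μ₂ := by rw [real_inner_comm]; exact hbu
  have haa : ⟪a, a⟫ = μ₂ := by
    rw [hμ₂, hA2, hb, hA, ← ha]
  have hba : ⟪b, a⟫ = μ₃ := by
    rw [hμ₃, hA3, hA, ← ha]
  have hab : ⟪a, b⟫ = μ₃ := by rw [real_inner_comm]; exact hba
  have hbb : ⟪b, b⟫ = μ₄ := by
    rw [hμ₄, hA4, hA, ← ha, hA, ← hb]
  have hTuu : ⟪T u, u⟫ = τ := hτ.symm
  -- derivative of τf
  have hTξd : HasDerivAt (fun t => T (ξ t)) (T ((1/2 : ℝ) • a)) θ :=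
    T.hasFDerivAt.comp_hasDerivAt θ hξdθ
  have hτd : HasDerivAt τf (⟪T u, (1/2 : ℝ) • a⟫ + ⟪T ((1/2 : ℝ) • a), u⟫) θ := by
    have h := HasDerivAt.inner ℝ hTξd hξdθ
    rwa [← hu] at h
  have hτdval : ⟪T u, (1/2 : ℝ) • a⟫ + ⟪T ((1/2 : ℝ) • a), u⟫ = μ₂ := by
    have eTu : T u = a + τ • u := by rw [ha]; abel
    have eTa : T a = b + τ • a := by rw [hb]; abel
    have e1 : ⟪T u, a⟫ = μ₂ := by
      rw [eTu, inner_add_left, real_inner_smul_left, haa, hua]; ring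
    have e2 : ⟪T a, u⟫ = μ₂ := by
      rw [eTa, inner_add_left, real_inner_smul_left, hbu, hau]; ring
    rw [map_smul, real_inner_smul_left, real_inner_smul_right, e1, e2]; ring
  rw [hτdval] at hτd
  -- second derivative
  have hderiv1 : deriv ξ = fun t => (1/2 : ℝ) • (T (ξ t) - τf t • ξ t) :=
    funext fun t => (hξd t).deriv
  have hξ2 : HasDerivAt (deriv ξ)
      ((1/2 : ℝ) • (T ((1/2 : ℝ) • a) - (τf θ • ((1/2 : ℝ) • a) + μ₂ • u))) θ := by
    rw [hderiv1]
    have h := (hTξd.sub (hτd.smul hξdθ)).const_smul ((1/2 : ℝ))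
    rwa [← hu] at h
  have hDξ1 : deriv ξ θ = (1/2 : ℝ) • a := hξdθ.deriv
  have hDξ2 : deriv (deriv ξ) θ = (1/4 : ℝ) • b - (μ₂ / 2) • u := by
    rw [hξ2.deriv, hτθ, hb]
    simp only [map_smul]
    match_scalars <;> ring
  -- scalar computations
  have hn1 : ‖deriv ξ θ‖ ^ 2 = μ₂ / 4 := by
    rw [hDξ1, ← real_inner_self_eq_norm_sq, real_inner_smul_left, real_inner_smul_right, haa]
    ring
  have hn2 : ‖deriv ξ θ‖ ^ 4 = μ₂ ^ 2 / 16 := by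
    have : ‖deriv ξ θ‖ ^ 4 = (‖deriv ξ θ‖ ^ 2) ^ 2 := by ring
    rw [this, hn1]; ring
  rw [hn2, hn1, hDξ1, hDξ2, ← real_inner_self_eq_norm_sq]
  simp only [inner_sub_left, inner_sub_right, real_inner_smul_left, real_inner_smul_right,
    huu, hau, hua, hbu, hub, haa, hba, hab, hbb]
  have hμ₂ne : μ₂ ≠ 0 := ne_of_gt hμ₂pos
  field_simp
  ring
end

section
/- Multi-parameter covariance lower bound: Let ξ : ℝ^r → H be a map into the unit sphere of a real Hilbert space H (‖ξ(θ)‖ = 1 for all θ), differentiable at θ₀, with partial derivatives ∂_iξ(θ₀). Assume the Fisher information matrix G, the r×r matrix with entries G_{ij} = 4⟪∂_iξ(θ₀), ∂_jξ(θ₀)⟫, is positive definite. Let T_1, …, T_n be continuous self-adjoint operators on H and set τ_α(θ) = ⟪T_αξ(θ), ξ(θ)⟫ and B_{αi} = ∂_iτ_α(θ₀). Then the n×n matrix C − B·G⁻¹·Bᵀ is positive semidefinite, where C_{αβ} = Cov_{ξ(θ₀)}[T_α, T_β]. -/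
open scoped RealInnerProductSpace
open scoped Matrix

/-- **Multi-parameter covariance lower bound.** For a differentiable multi-parameter family
of unit vectors with positive-definite Fisher information matrix `G`, estimators `T α` with
expectation functions `τ_α` and derivative matrix `B`, the matrix `C − B·G⁻¹·Bᵀ` is
positive semidefinite, where `C` is the covariance matrix of the estimators. -/
theorem multiparameter_covariance_lower_bound {H : Type*}
    [NormedAddCommGroup H] [InnerProductSpace ℝ H] {r n : ℕ}
    (ξ : (Fin r → ℝ) → H) (hnorm : ∀ θ, ‖ξ θ‖ = 1)
    (θ₀ : Fin r → ℝ) (D : (Fin r → ℝ) →L[ℝ] H) (hD : HasFDerivAt ξ D θ₀)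
    (G : Matrix (Fin r) (Fin r) ℝ)
    (hG : ∀ i j, G i j = 4 * ⟪D (Pi.single i 1), D (Pi.single j 1)⟫)
    (hGpd : G.PosDef)
    (T : Fin n → H →L[ℝ] H) (hT : ∀ α, ∀ x y : H, ⟪T α x, y⟫ = ⟪x, T α y⟫)
    (B : Matrix (Fin n) (Fin r) ℝ)
    (hB : ∀ α i, B α i = fderiv ℝ (fun θ => ⟪T α (ξ θ), ξ θ⟫) θ₀ (Pi.single i 1))
    (C : Matrix (Fin n) (Fin n) ℝ)
    (hC : ∀ α β, C α β =
      ⟪T α (ξ θ₀) - ⟪T α (ξ θ₀), ξ θ₀⟫ • ξ θ₀, T β (ξ θ₀) - ⟪T β (ξ θ₀), ξ θ₀⟫ • ξ θ₀⟫) :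
    (C - B * G⁻¹ * B.transpose).PosSemidef := by
  classical
  set ξ₀ := ξ θ₀ with hξ₀
  -- orthogonality of derivative directions to ξ₀
  have hd0 : ∀ v, ⟪ξ₀, D v⟫ = 0 := by
    intro v
    have h1 : HasFDerivAt (fun θ => ⟪ξ θ, ξ θ⟫)
        ((fderivInnerCLM ℝ (ξ₀, ξ₀)).comp (D.prod D)) θ₀ := hD.inner ℝ hD
    have heq : (fun θ => ⟪ξ θ, ξ θ⟫) = fun _ : Fin r → ℝ => (1 : ℝ) := by
      funext θ
      rw [real_inner_self_eq_norm_sq (ξ θ), hnorm θ, one_pow]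
    rw [heq] at h1
    have h2 : HasFDerivAt (fun _ : Fin r → ℝ => (1 : ℝ))
        (0 : (Fin r → ℝ) →L[ℝ] ℝ) θ₀ := hasFDerivAt_const (1 : ℝ) θ₀
    have h3 := h1.unique h2
    have h4 := congrArg (fun L : (Fin r → ℝ) →L[ℝ] ℝ => L v) h3
    simp only [ContinuousLinearMap.comp_apply, ContinuousLinearMap.prod_apply,
      fderivInnerCLM_apply, ContinuousLinearMap.zero_apply] at h4
    linarith [real_inner_comm (D v) ξ₀]
  -- formula for B
  have hB' : ∀ α i, B α i = 2 * ⟪T α ξ₀, D (Pi.single i 1)⟫ := by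
    intro α i
    have hφ : HasFDerivAt (fun θ => ⟪T α (ξ θ), ξ θ⟫)
        ((fderivInnerCLM ℝ (T α ξ₀, ξ₀)).comp (((T α).comp D).prod D)) θ₀ :=
      HasFDerivAt.inner ℝ (((T α).hasFDerivAt).comp θ₀ hD) hD
    rw [hB, hφ.fderiv]
    simp only [ContinuousLinearMap.comp_apply, ContinuousLinearMap.prod_apply,
      fderivInnerCLM_apply]
    rw [hT α (D (Pi.single i 1)) ξ₀, real_inner_comm (D (Pi.single i 1)) (T α ξ₀)]
    ring
  have hGdet : IsUnit G.det := isUnit_iff_ne_zero.2 hGpd.det_pos.ne'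
  rw [Matrix.posSemidef_iff_dotProduct_mulVec]
  constructor
  · -- Hermitian
    have hC_herm : C.IsHermitian := by
      ext α β
      simp only [Matrix.conjTranspose_apply, star_trivial, hC]
      exact real_inner_comm _ _
    have hGinv : (G⁻¹).IsHermitian := hGpd.isHermitian.inv
    have hK : (B * G⁻¹ * B.conjTranspose).IsHermitian :=
      Matrix.isHermitian_mul_mul_conjTranspose B hGinv
    have hBH : B.conjTranspose = B.transpose := Matrix.conjTranspose_eq_transpose_of_trivial B
    rw [hBH] at hK
    exact hC_herm.sub hK
  · intro Λ
    simp only [star_trivial]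
    -- the centered estimator vector
    set v : H := ∑ α, Λ α • (T α ξ₀ - ⟪T α ξ₀, ξ₀⟫ • ξ₀) with hv
    set w : Fin r → ℝ := B.transpose *ᵥ Λ with hw
    set a : Fin r → ℝ := G⁻¹ *ᵥ w with ha
    set u : H := ∑ i, a i • ((2 : ℝ) • D (Pi.single i 1)) with hu
    -- quadratic form of C
    have hCq : Λ ⬝ᵥ (C *ᵥ Λ) = ⟪v, v⟫ := by
      simp only [hv, dotProduct, Matrix.mulVec, dotProduct, inner_sum, sum_inner,
        real_inner_smul_left, real_inner_smul_right, hC, Finset.mul_sum]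
      rw [Finset.sum_comm]
      refine Finset.sum_congr rfl fun α _ => Finset.sum_congr rfl fun β _ => by ring
    -- w i = ⟪v, 2 • d i⟫
    have hwv : ∀ i, w i = 2 * ⟪v, D (Pi.single i 1)⟫ := by
      intro i
      simp only [hw, Matrix.mulVec, dotProduct, Matrix.transpose_apply, hv, sum_inner,
        real_inner_smul_left, real_inner_smul_right, inner_sub_left, hd0, Finset.mul_sum]
      refine Finset.sum_congr rfl fun α _ => ?_
      rw [hB' α i]
      ring
    have hGa : G *ᵥ a = w := by
      rw [ha, Matrix.mulVec_mulVec, Matrix.mul_nonsing_inv G hGdet, Matrix.one_mulVec]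
    -- quadratic form of B G⁻¹ Bᵀ
    have step : (B * G⁻¹ * B.transpose) *ᵥ Λ = B *ᵥ a := by
      rw [ha, hw, Matrix.mulVec_mulVec, Matrix.mulVec_mulVec]
    have hKq : Λ ⬝ᵥ ((B * G⁻¹ * B.transpose) *ᵥ Λ) = w ⬝ᵥ a := by
      rw [step, Matrix.dotProduct_mulVec, hw, Matrix.mulVec_transpose]
    -- ⟪v, u⟫ = w ⬝ᵥ a
    have hvu : ⟪v, u⟫ = w ⬝ᵥ a := by
      simp only [hu, inner_sum, real_inner_smul_right, dotProduct]
      refine Finset.sum_congr rfl fun i _ => ?_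
      rw [hwv i]; ring
    -- ⟪u, u⟫ = w ⬝ᵥ a
    have huu : ⟪u, u⟫ = w ⬝ᵥ a := by
      have : ⟪u, u⟫ = a ⬝ᵥ (G *ᵥ a) := by
        simp only [hu, inner_sum, sum_inner, real_inner_smul_left, real_inner_smul_right,
          dotProduct, Matrix.mulVec, Finset.mul_sum]
        refine Finset.sum_congr rfl fun i _ => Finset.sum_congr rfl fun j _ => ?_
        rw [hG i j, real_inner_comm (D (Pi.single j 1)) (D (Pi.single i 1))]; ring
      rw [this, hGa, dotProduct_comm]
    set s : ℝ := w ⬝ᵥ a with hs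
    have hs0 : 0 ≤ s := by rw [← huu]; exact real_inner_self_nonneg
    have hV0 : 0 ≤ ⟪v, v⟫ := real_inner_self_nonneg
    have hcs := real_inner_mul_inner_self_le v u
    rw [hvu, huu] at hcs
    have hsV : s ≤ ⟪v, v⟫ := by
      rcases eq_or_lt_of_le hs0 with h | h
      · rw [← h]; exact hV0
      · nlinarith
    rw [Matrix.sub_mulVec, dotProduct_sub, hCq, hKq]
    linarith
end
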